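/- Let B = [C₁ᵃ, C₂ᵃ] × [C₁ᵇ, C₂ᵇ] × [C₁ᵃ, C₂ᵃ] × [C₁ᵇ, C₂ᵇ] ⊆ ℝ⁴. If x : [0, T] → ℝ⁴ is differentiable with x'(t) = G(x(t)) for all t ∈ [0, T] and x(0) ∈ B, then x(t) ∈ B for all t ∈ [0, T]; that is, the box B is positively invariant for the mean-field dynamics. In particular every forward orbit starting in B is bounded. -/

import Mathlib

open Set

lemma hd_fst {E F : Type*} [NormedAddCommGroup E] [NormedSpace ℝ E]
    [NormedAddCommGroup F] [NormedSpace ℝ F] {x : ℝ → E × F} {G : E × F} {s : Set ℝ} {t : ℝ}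
    (h : HasDerivWithinAt x G s t) : HasDerivWithinAt (fun t => (x t).1) G.1 s t := by
  simpa using (h.hasFDerivWithinAt.fst).hasDerivWithinAt

lemma hd_snd {E F : Type*} [NormedAddCommGroup E] [NormedSpace ℝ E]
    [NormedAddCommGroup F] [NormedSpace ℝ F] {x : ℝ → E × F} {G : E × F} {s : Set ℝ} {t : ℝ}
    (h : HasDerivWithinAt x G s t) : HasDerivWithinAt (fun t => (x t).2) G.2 s t := by
  simpa using (h.hasFDerivWithinAt.snd).hasDerivWithinAt

/-- Scalar upper fence. -/
lemma scalar_upper {T hi : ℝ} {f f' : ℝ → ℝ}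
    (hd : ∀ t ∈ Icc (0:ℝ) T, HasDerivWithinAt f (f' t) (Icc 0 T) t)
    (h0 : f 0 ≤ hi)
    (hup : ∀ t ∈ Icc (0:ℝ) T, hi < f t → f' t < 0) :
    ∀ t ∈ Icc (0:ℝ) T, f t ≤ hi := by
  intro t ht
  have hcont : ContinuousOn f (Icc 0 T) := fun s hs => (hd s hs).continuousWithinAt
  have hd' : ∀ s ∈ Ico (0:ℝ) T, HasDerivWithinAt f (f' s) (Ici s) s := by
    intro s hs
    exact ((hd s (Ico_subset_Icc_self hs)).mono_of_mem_nhdsWithin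
      (Icc_mem_nhdsGE_of_mem hs))
  have key : ∀ ε > 0, f t ≤ hi + ε * (1 + t) := by
    intro ε hε
    exact image_le_of_deriv_right_lt_deriv_boundary (B := fun s => hi + ε * (1 + s))
      (B' := fun _ => ε) hcont hd'
      (show f 0 ≤ hi + ε * (1 + 0) by nlinarith)
      (fun s => by
        simpa using ((hasDerivAt_id s).const_add 1 |>.const_mul ε |>.const_add hi))
      (fun s hs heq => by
        have hs' : hi < f s := by
          have : f s = hi + ε * (1 + s) := heq
          nlinarith [hs.1]
        exact lt_trans (hup s (Ico_subset_Icc_self hs) hs') hε)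
      ht
  by_contra hlt
  push_neg at hlt
  have ht0 : 0 ≤ t := ht.1
  have h1t : 0 < 1 + t := by linarith
  set ε := (f t - hi) / (2 * (1 + t)) with hεdef
  have hε : 0 < ε := by
    apply div_pos <;> nlinarith
  have h2 : ε * (1 + t) = (f t - hi) / 2 := by
    rw [hεdef, div_mul_eq_mul_div, mul_div_mul_right _ _ h1t.ne']
  have := key ε hε
  rw [h2] at this
  linarith

lemma scalar_inv {T lo hi : ℝ} {f f' : ℝ → ℝ}
    (hd : ∀ t ∈ Icc (0:ℝ) T, HasDerivWithinAt f (f' t) (Icc 0 T) t)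
    (h0 : f 0 ∈ Icc lo hi)
    (hup : ∀ t ∈ Icc (0:ℝ) T, hi < f t → f' t < 0)
    (hlo : ∀ t ∈ Icc (0:ℝ) T, f t < lo → 0 < f' t) :
    ∀ t ∈ Icc (0:ℝ) T, f t ∈ Icc lo hi := by
  intro t ht
  refine ⟨?_, scalar_upper hd h0.2 hup t ht⟩
  have := scalar_upper (hi := -lo) (f := fun s => -f s) (f' := fun s => -f' s)
    (fun s hs => (hd s hs).neg) (by simpa using neg_le_neg h0.1)
    (fun s hs h => by
      have := hlo s hs (by linarith)
      linarith) t ht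
  linarith


/-- `ρ(w) = 1/(1 + e^w)`. -/
noncomputable def logitρ (w : ℝ) : ℝ := 1 / (1 + Real.exp w)

/-- The mean field vector field `G` of the `2×2` traffic game, on coordinates
`(x¹ᵃ, x¹ᵇ, x²ᵃ, x²ᵇ)`. -/
noncomputable def meanField2x2 (C1a C2a C1b C2b β1 β2 : ℝ) (x : ℝ × ℝ × ℝ × ℝ) :
    ℝ × ℝ × ℝ × ℝ :=
  (logitρ (β1 * (x.1 - x.2.1)) * (C1a + (C2a - C1a) * logitρ (β2 * (x.2.2.1 - x.2.2.2)) - x.1),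
   (1 - logitρ (β1 * (x.1 - x.2.1))) *
     (C2b - (C2b - C1b) * logitρ (β2 * (x.2.2.1 - x.2.2.2)) - x.2.1),
   logitρ (β2 * (x.2.2.1 - x.2.2.2)) * (C1a + (C2a - C1a) * logitρ (β1 * (x.1 - x.2.1)) - x.2.2.1),
   (1 - logitρ (β2 * (x.2.2.1 - x.2.2.2))) *
     (C2b - (C2b - C1b) * logitρ (β1 * (x.1 - x.2.1)) - x.2.2.2))

lemma logitρ_pos (w : ℝ) : 0 < logitρ w :=
  div_pos one_pos (by positivity)

lemma logitρ_lt_one (w : ℝ) : logitρ w < 1 := by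
  rw [logitρ, div_lt_one (by positivity)]
  linarith [Real.exp_pos w]

/-- The box `B = [C₁ᵃ,C₂ᵃ] × [C₁ᵇ,C₂ᵇ] × [C₁ᵃ,C₂ᵃ] × [C₁ᵇ,C₂ᵇ]` is positively
invariant for the mean field dynamics: any solution of `x' = G(x)` on `[0,T]`
starting in `B` stays in `B`. -/
theorem box_positively_invariant
    (C1a C2a C1b C2b β1 β2 : ℝ) (hca : C1a ≤ C2a) (hcb : C1b ≤ C2b)
    (hβ1 : 0 < β1) (hβ2 : 0 < β2)
    (T : ℝ) (hT : 0 ≤ T) (x : ℝ → ℝ × ℝ × ℝ × ℝ)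
    (hderiv : ∀ t ∈ Set.Icc (0 : ℝ) T,
      HasDerivWithinAt x (meanField2x2 C1a C2a C1b C2b β1 β2 (x t)) (Set.Icc 0 T) t)
    (hx0 : x 0 ∈ Set.Icc C1a C2a ×ˢ Set.Icc C1b C2b ×ˢ Set.Icc C1a C2a ×ˢ Set.Icc C1b C2b) :
    ∀ t ∈ Set.Icc (0 : ℝ) T,
      x t ∈ Set.Icc C1a C2a ×ˢ Set.Icc C1b C2b ×ˢ Set.Icc C1a C2a ×ˢ Set.Icc C1b C2b := by
  simp only [Set.mem_prod] at hx0
  obtain ⟨h01, h02, h03, h04⟩ := hx0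
  set ρ1 : ℝ → ℝ := fun t => logitρ (β1 * ((x t).1 - (x t).2.1)) with hρ1
  set ρ2 : ℝ → ℝ := fun t => logitρ (β2 * ((x t).2.2.1 - (x t).2.2.2)) with hρ2
  have hρ1p : ∀ t, 0 < ρ1 t := fun t => logitρ_pos _
  have hρ1l : ∀ t, ρ1 t < 1 := fun t => logitρ_lt_one _
  have hρ2p : ∀ t, 0 < ρ2 t := fun t => logitρ_pos _
  have hρ2l : ∀ t, ρ2 t < 1 := fun t => logitρ_lt_one _
  have h1 := scalar_inv (f := fun t => (x t).1)
    (f' := fun t => ρ1 t * (C1a + (C2a - C1a) * ρ2 t - (x t).1))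
    (fun t ht => hd_fst (hderiv t ht)) h01
    (fun t ht h => mul_neg_of_pos_of_neg (hρ1p t)
      (by nlinarith [hρ2p t, hρ2l t]))
    (fun t ht h => mul_pos (hρ1p t) (by nlinarith [hρ2p t, hρ2l t]))
  have h2 := scalar_inv (f := fun t => (x t).2.1)
    (f' := fun t => (1 - ρ1 t) * (C2b - (C2b - C1b) * ρ2 t - (x t).2.1))
    (fun t ht => hd_fst (hd_snd (hderiv t ht))) h02
    (fun t ht h => mul_neg_of_pos_of_neg (by linarith [hρ1l t])
      (by nlinarith [hρ2p t, hρ2l t]))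
    (fun t ht h => mul_pos (by linarith [hρ1l t]) (by nlinarith [hρ2p t, hρ2l t]))
  have h3 := scalar_inv (f := fun t => (x t).2.2.1)
    (f' := fun t => ρ2 t * (C1a + (C2a - C1a) * ρ1 t - (x t).2.2.1))
    (fun t ht => hd_fst (hd_snd (hd_snd (hderiv t ht)))) h03
    (fun t ht h => mul_neg_of_pos_of_neg (hρ2p t)
      (by nlinarith [hρ1p t, hρ1l t]))
    (fun t ht h => mul_pos (hρ2p t) (by nlinarith [hρ1p t, hρ1l t]))
  have h4 := scalar_inv (f := fun t => (x t).2.2.2)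
    (f' := fun t => (1 - ρ2 t) * (C2b - (C2b - C1b) * ρ1 t - (x t).2.2.2))
    (fun t ht => hd_snd (hd_snd (hd_snd (hderiv t ht)))) h04
    (fun t ht h => mul_neg_of_pos_of_neg (by linarith [hρ2l t])
      (by nlinarith [hρ1p t, hρ1l t]))
    (fun t ht h => mul_pos (by linarith [hρ2l t]) (by nlinarith [hρ1p t, hρ1l t]))
  intro t ht
  exact ⟨h1 t ht, h2 t ht, h3 t ht, h4 t ht⟩
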